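/- For an even integer N and τ ∈ (0,1], the function R_N¹(x) = √(N/(2π)) e^{−Nx²/(1+τ)} Σ_{k=0}^{N−2} ((τ/2)^k/k!) H_k(√(N/(2τ)) x)² has derivative (R_N¹)′(x) = −√(2/π) · ((τ/2)^{N−3/2}/(1+τ)) · (N/(N−2)!) · e^{−Nx²/(1+τ)} · H_{N−2}(√(N/(2τ)) x) · H_{N−1}(√(N/(2τ)) x). -/

import Mathlib

/-! The function `R_N¹` is `√(N/2π) f(√(N/2τ) x)` with
`f(u) = exp(-b u²) ∑_{k ≤ m} tᵏ/k! H_k(u)²`, `t = τ/2`, `b = 2τ/(1+τ)`, `m = N - 2`.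
Using `H_k' = 2k H_{k-1}` and the three-term recurrence `H_{k+1} = 2u H_k - 2k H_{k-1}`,
the derivative of the `k`-th summand of `f` is `b e^{-bu²} (G_k - G_{k+1})` with
`G_{k+1} = tᵏ/k! H_k H_{k+1}`, exactly when `b (1 + 2t) = 4t`; the sum therefore telescopes to
`f'(u) = -b e^{-bu²} tᵐ/m! H_m(u) H_{m+1}(u)`. -/

open Real

/-- Physicists' Hermite polynomials: `H 0 = 1`, `H (n+1) x = 2x H n x - (H n)'(x)`. -/
noncomputable def physHermite : ℕ → ℝ → ℝ
  | 0 => fun _ => 1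
  | n + 1 => fun x => 2 * x * physHermite n x - deriv (physHermite n) x

open Polynomial
open scoped Nat

-- `physHermite` is defined through `deriv`, which is junk unless we know differentiability:
-- identifying it with a polynomial supplies that.
noncomputable def physHermitePoly : ℕ → ℝ[X]
  | 0 => 1
  | n + 1 => 2 * X * physHermitePoly n - derivative (physHermitePoly n)

lemma physHermite_eq_eval (n : ℕ) : physHermite n = fun x => (physHermitePoly n).eval x := by
  induction n with
  | zero => funext x; simp [physHermite, physHermitePoly]
  | succ n ih =>
    funext x
    simp only [physHermite, physHermitePoly, ih, Polynomial.deriv]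
    simp [mul_assoc]

lemma derivative_physHermitePoly_succ (n : ℕ) :
    derivative (physHermitePoly (n + 1)) = C (2 * (n + 1 : ℝ)) * physHermitePoly n := by
  induction n with
  | zero => simp [physHermitePoly, map_ofNat C]
  | succ n ih =>
    rw [physHermitePoly, derivative_sub, derivative_mul, derivative_mul, ih, derivative_mul,
      derivative_X, derivative_ofNat, derivative_C, physHermitePoly]
    simp only [C_mul, C_add, map_ofNat C, map_natCast C, C_1]
    push_cast
    ring

lemma hasDerivAt_physHermite (n : ℕ) (x : ℝ) :
    HasDerivAt (physHermite n) (2 * n * physHermite (n - 1) x) x := by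
  cases n with
  | zero => simpa [physHermite_eq_eval, physHermitePoly] using Polynomial.hasDerivAt (1 : ℝ[X]) x
  | succ n =>
    simpa [physHermite_eq_eval, derivative_physHermitePoly_succ] using
      Polynomial.hasDerivAt (physHermitePoly (n + 1)) x

lemma physHermite_succ (n : ℕ) (u : ℝ) :
    physHermite (n + 1) u = 2 * u * physHermite n u - 2 * n * physHermite (n - 1) u := by
  rw [← (hasDerivAt_physHermite n u).deriv]
  rfl

lemma hasDerivAt_exp_mul_sum_physHermite_sq {b t : ℝ} (hbt : b * (1 + 2 * t) = 4 * t)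
    (m : ℕ) (u : ℝ) :
    HasDerivAt
      (fun v => exp (-b * v ^ 2) *
        ∑ k ∈ Finset.range (m + 1), t ^ k / k ! * physHermite k v ^ 2)
      (-b * exp (-b * u ^ 2) * (t ^ m / m !) * physHermite m u * physHermite (m + 1) u) u := by
  have hexp : HasDerivAt (fun v => exp (-b * v ^ 2)) (exp (-b * u ^ 2) * (-b * (2 * u))) u := by
    simpa using ((hasDerivAt_pow 2 u).const_mul (-b)).exp
  induction m with
  | zero =>
    refine (hexp.mul_const 1).congr_deriv ?_ |>.congr_of_eventuallyEq ?_
    · rw [physHermite_succ]; simp [physHermite]; ring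
    · filter_upwards with v using by simp [physHermite]
  | succ m ih =>
    have hterm := hexp.fun_mul (((hasDerivAt_physHermite (m + 1) u).fun_pow 2).const_mul
      (t ^ (m + 1) / (m + 1)! : ℝ))
    have hfac : ((m + 1)! : ℝ) = (m + 1) * m ! := by push_cast [Nat.factorial_succ]; ring
    refine (ih.fun_add hterm).congr_deriv ?_ |>.congr_of_eventuallyEq ?_
    · rw [physHermite_succ (m + 1), hfac]
      simp only [Nat.add_sub_cancel, Nat.cast_add, Nat.cast_one]
      field_simp
      linear_combination (-(m + 1) * t ^ m * physHermite m u * physHermite (m + 1) u) * hbt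
    · filter_upwards with v using by simp only [Finset.sum_range_succ _ (m + 1), mul_add]

lemma sqrt_div_two_pi_mul_sqrt_div_two_mul {n τ : ℝ} (hn : 0 ≤ n) (hτ : 0 < τ) :
    sqrt (n / (2 * π)) * sqrt (n / (2 * τ)) * (2 * τ) = sqrt (2 / π) * sqrt (τ / 2) * n := by
  rw [← pow_left_inj₀ (by positivity) (by positivity) two_ne_zero]
  simp only [mul_pow, sq_sqrt (by positivity : 0 ≤ n / (2 * π)),
    sq_sqrt (by positivity : 0 ≤ n / (2 * τ)), sq_sqrt (by positivity : (0 : ℝ) ≤ 2 / π),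
    sq_sqrt (by positivity : 0 ≤ τ / 2)]
  field_simp

theorem RN1_deriv_general (N : ℕ) (hN : 2 ≤ N) (τ : ℝ) (hτ0 : 0 < τ)
    (x : ℝ) :
    deriv (fun y : ℝ => Real.sqrt ((N : ℝ) / (2 * π)) * Real.exp (-(N : ℝ) * y ^ 2 / (1 + τ)) *
        ∑ k ∈ Finset.range (N - 1),
          (τ / 2) ^ k / (Nat.factorial k : ℝ) *
            (physHermite k (Real.sqrt ((N : ℝ) / (2 * τ)) * y)) ^ 2) x
      = -Real.sqrt (2 / π) * ((τ / 2) ^ ((N : ℝ) - 3 / 2) / (1 + τ)) *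
          ((N : ℝ) / (Nat.factorial (N - 2) : ℝ)) * Real.exp (-(N : ℝ) * x ^ 2 / (1 + τ)) *
          physHermite (N - 2) (Real.sqrt ((N : ℝ) / (2 * τ)) * x) *
          physHermite (N - 1) (Real.sqrt ((N : ℝ) / (2 * τ)) * x) := by
  obtain ⟨m, rfl⟩ : ∃ m, N = m + 2 := ⟨N - 2, by omega⟩
  set c := sqrt (((m + 2 : ℕ) : ℝ) / (2 * τ))
  have hc : c ^ 2 = ((m + 2 : ℕ) : ℝ) / (2 * τ) := sq_sqrt (by positivity)
  have hexponent (y : ℝ) :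
      -(2 * τ / (1 + τ)) * (c * y) ^ 2 = -((m + 2 : ℕ) : ℝ) * y ^ 2 / (1 + τ) := by
    rw [mul_pow, hc]; field_simp
  have hf := ((hasDerivAt_exp_mul_sum_physHermite_sq (b := 2 * τ / (1 + τ)) (t := τ / 2)
    (by field_simp; ring) m (c * x)).comp x ((hasDerivAt_id x).const_mul c)).const_mul
    (sqrt (((m + 2 : ℕ) : ℝ) / (2 * π)))
  simp only [Function.comp_def, hexponent, mul_one] at hf
  have hrpow : (τ / 2) ^ (((m + 2 : ℕ) : ℝ) - 3 / 2) = (τ / 2) ^ m * sqrt (τ / 2) := by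
    rw [show ((m + 2 : ℕ) : ℝ) - 3 / 2 = m + 1 / 2 by push_cast; ring,
      rpow_add (by positivity), rpow_natCast, sqrt_eq_rpow]
  rw [show m + 2 - 1 = m + 1 by omega, show m + 2 - 2 = m by omega,
    (hf.congr_of_eventuallyEq (.of_forall fun y => mul_assoc _ _ _)).deriv, hrpow]
  linear_combination (-(exp (-((m + 2 : ℕ) : ℝ) * x ^ 2 / (1 + τ)) * (τ / 2) ^ m *
    physHermite m (c * x) * physHermite (m + 1) (c * x) / (1 + τ) / m !)) *
    sqrt_div_two_pi_mul_sqrt_div_two_mul (Nat.cast_nonneg (m + 2)) hτ0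

theorem RN1_deriv (N : ℕ) (hN : 2 ≤ N) (hNe : Even N) (τ : ℝ) (hτ0 : 0 < τ) (hτ1 : τ ≤ 1)
    (x : ℝ) :
    deriv (fun y : ℝ => Real.sqrt ((N : ℝ) / (2 * π)) * Real.exp (-(N : ℝ) * y ^ 2 / (1 + τ)) *
        ∑ k ∈ Finset.range (N - 1),
          (τ / 2) ^ k / (Nat.factorial k : ℝ) *
            (physHermite k (Real.sqrt ((N : ℝ) / (2 * τ)) * y)) ^ 2) x
      = -Real.sqrt (2 / π) * ((τ / 2) ^ ((N : ℝ) - 3 / 2) / (1 + τ)) *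
          ((N : ℝ) / (Nat.factorial (N - 2) : ℝ)) * Real.exp (-(N : ℝ) * x ^ 2 / (1 + τ)) *
          physHermite (N - 2) (Real.sqrt ((N : ℝ) / (2 * τ)) * x) *
          physHermite (N - 1) (Real.sqrt ((N : ℝ) / (2 * τ)) * x) :=
  RN1_deriv_general N hN τ hτ0 x
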